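/- Suppose each P_γ + K is closed, and there exists e ∈ K \ {0} such that for every λ ∈ Λ the infimum inf_{γ∈Γ} ℤ₁^{e,K}(P_γ, Q_λ) is attained. Then P ≤_K^L Q if and only if sup_{λ∈Λ} inf_{γ∈Γ} ℤ₁^{e,K}(P_γ, Q_λ) ≤ 0. -/

import Mathlib

/-! Because `K` is a convex cone containing `e`, `Zone e K A B ≤ 0` says exactly that
`b + ε • e ∈ A + K` for all `b ∈ B` and `ε > 0`; closedness of `A + K` lets `ε → 0`, so
`B ⊆ A + K ↔ Zone e K A B ≤ 0`. Attainment of the infimum over `γ` turns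
`inf_γ Zone e K (P γ) (Q λ) ≤ 0` into `Zone e K (P γ) (Q λ) ≤ 0` for a single `γ`. -/

open Set Pointwise

/-- Gerstewitz scalarization function. -/
noncomputable def zG {Y : Type*} [AddCommGroup Y] [Module ℝ Y] (e : Y) (K : Set Y) (y : Y) :
    EReal :=
  sInf ((fun t : ℝ => (t : EReal)) '' {t : ℝ | t • e - y ∈ K})

/-- ℤ₁^{e,K}(A,B) = sup_{b∈B} inf_{a∈A} z^{e,K}(a − b). -/
noncomputable def Zone {Y : Type*} [AddCommGroup Y] [Module ℝ Y] (e : Y) (K : Set Y)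
    (A B : Set Y) : EReal :=
  ⨆ b ∈ B, ⨅ a ∈ A, zG e K (a - b)

section Scalarization

variable {Y : Type*} [AddCommGroup Y] [Module ℝ Y] {K : Set Y} {e : Y}

lemma add_mem_of_convex_of_smul_mem (hKconv : Convex ℝ K)
    (hKcone : ∀ c : ℝ, 0 ≤ c → ∀ x ∈ K, c • x ∈ K) {x y : Y} (hx : x ∈ K) (hy : y ∈ K) :
    x + y ∈ K := by
  have hmid := hKconv hx hy (by norm_num : (0 : ℝ) ≤ 1 / 2) (by norm_num : (0 : ℝ) ≤ 1 / 2)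
    (by norm_num)
  convert hKcone 2 zero_le_two _ hmid using 1
  rw [smul_add, smul_smul, smul_smul]
  norm_num

lemma zG_le_of_smul_sub_mem {y : Y} {t : ℝ} (h : t • e - y ∈ K) : zG e K y ≤ t :=
  sInf_le ⟨t, h, rfl⟩

lemma smul_sub_mem_of_zG_lt (hKconv : Convex ℝ K)
    (hKcone : ∀ c : ℝ, 0 ≤ c → ∀ x ∈ K, c • x ∈ K) (heK : e ∈ K) {y : Y} {t : ℝ}
    (h : zG e K y < t) : t • e - y ∈ K := by
  obtain ⟨_, ⟨s, hs, rfl⟩, hst⟩ := sInf_lt_iff.mp h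
  have hst : s < t := EReal.coe_lt_coe_iff.mp hst
  convert add_mem_of_convex_of_smul_mem hKconv hKcone hs
    (hKcone (t - s) (sub_nonneg.mpr hst.le) e heK) using 1
  rw [sub_smul]
  abel

lemma Zone_nonpos_of_subset_add {A B : Set Y} (h : B ⊆ A + K) : Zone e K A B ≤ 0 := by
  refine iSup₂_le fun b hb => ?_
  obtain ⟨a, ha, k, hk, rfl⟩ := h hb
  refine (iInf₂_le a ha).trans ?_
  have : (0 : ℝ) • e - (a - (a + k)) ∈ K := by simpa using hk
  exact_mod_cast zG_le_of_smul_sub_mem this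

lemma add_smul_mem_add_of_Zone_nonpos (hKconv : Convex ℝ K)
    (hKcone : ∀ c : ℝ, 0 ≤ c → ∀ x ∈ K, c • x ∈ K) (heK : e ∈ K) {A B : Set Y}
    (hZ : Zone e K A B ≤ 0) {b : Y} (hb : b ∈ B) {ε : ℝ} (hε : 0 < ε) :
    b + ε • e ∈ A + K := by
  have hlt : ⨅ a ∈ A, zG e K (a - b) < ε :=
    ((le_iSup₂ (f := fun b _ => ⨅ a ∈ A, zG e K (a - b)) b hb).trans hZ).trans_lt
      (EReal.coe_pos.mpr hε)
  obtain ⟨a, hlt⟩ := iInf_lt_iff.mp hlt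
  obtain ⟨ha, hlt⟩ := iInf_lt_iff.mp hlt
  refine ⟨a, ha, ε • e - (a - b), smul_sub_mem_of_zG_lt hKconv hKcone heK hlt, ?_⟩
  show a + (ε • e - (a - b)) = b + ε • e
  abel

lemma mem_of_isClosed_of_forall_add_smul_mem [TopologicalSpace Y] [ContinuousAdd Y]
    [ContinuousSMul ℝ Y] {S : Set Y} (hS : IsClosed S) {b : Y}
    (h : ∀ ε : ℝ, 0 < ε → b + ε • e ∈ S) : b ∈ S := by
  have hcont : Continuous fun ε : ℝ => b + ε • e := by fun_prop
  have htend := (hcont.tendsto 0).mono_left (nhdsWithin_le_nhds (s := Ioi 0))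
  rw [zero_smul, add_zero] at htend
  exact hS.mem_of_tendsto htend (eventually_nhdsWithin_of_forall h)

lemma subset_add_iff_Zone_nonpos [TopologicalSpace Y] [ContinuousAdd Y] [ContinuousSMul ℝ Y]
    (hKconv : Convex ℝ K) (hKcone : ∀ c : ℝ, 0 ≤ c → ∀ x ∈ K, c • x ∈ K) (heK : e ∈ K)
    {A B : Set Y} (hA : IsClosed (A + K)) :
    B ⊆ A + K ↔ Zone e K A B ≤ 0 :=
  ⟨Zone_nonpos_of_subset_add, fun hZ _ hb => mem_of_isClosed_of_forall_add_smul_mem hA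
    fun _ hε => add_smul_mem_add_of_Zone_nonpos hKconv hKcone heK hZ hb hε⟩

end Scalarization

theorem stmt_15_general {Y Γ Λ : Type*} [AddCommGroup Y] [Module ℝ Y] [TopologicalSpace Y]
    [IsTopologicalAddGroup Y] [ContinuousSMul ℝ Y]
    (K : Set Y) (hKconv : Convex ℝ K)
    (hKcone : ∀ (c : ℝ), 0 ≤ c → ∀ x ∈ K, c • x ∈ K)
    (P : Γ → Set Y) (Q : Λ → Set Y)
    (hPKcl : ∀ γ, IsClosed (P γ + K))
    (e : Y) (he : e ∈ K \ {0})
    (hatt : ∀ lam : Λ, ∃ γ : Γ, Zone e K (P γ) (Q lam) = ⨅ γ', Zone e K (P γ') (Q lam)) :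
    (∀ lam : Λ, ∃ γ : Γ, Q lam ⊆ P γ + K) ↔
      (⨆ lam : Λ, ⨅ γ : Γ, Zone e K (P γ) (Q lam)) ≤ 0 := by
  have key := fun γ lam =>
    subset_add_iff_Zone_nonpos (B := Q lam) hKconv hKcone he.1 (hPKcl γ)
  rw [iSup_le_iff]
  refine forall_congr' fun lam => ⟨fun ⟨γ, hγ⟩ => (iInf_le _ γ).trans ((key γ lam).mp hγ),
    fun hinf => ?_⟩
  obtain ⟨γ, hγ⟩ := hatt lam
  exact ⟨γ, (key γ lam).mpr (hγ ▸ hinf)⟩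

/-- with each P_γ + K closed and attainment of inf_γ ℤ₁^{e,K}(P_γ,Q_λ),
    P ≤_K^L Q iff sup_λ inf_γ ℤ₁^{e,K}(P_γ, Q_λ) ≤ 0. -/
theorem stmt_15 {Y Γ Λ : Type*} [AddCommGroup Y] [Module ℝ Y] [TopologicalSpace Y]
    [IsTopologicalAddGroup Y] [ContinuousSMul ℝ Y]
    (K : Set Y) (hKne : K.Nonempty) (hKcl : IsClosed K) (hKconv : Convex ℝ K)
    (hKcone : ∀ (c : ℝ), 0 ≤ c → ∀ x ∈ K, c • x ∈ K) (hKproper : K ≠ univ)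
    (hKpointed : K ∩ (-K) ⊆ {0})
    (P : Γ → Set Y) (Q : Λ → Set Y)
    (hP : ∀ γ, (P γ).Nonempty) (hQ : ∀ lam, (Q lam).Nonempty)
    (hPKcl : ∀ γ, IsClosed (P γ + K))
    (e : Y) (he : e ∈ K \ {0})
    (hatt : ∀ lam : Λ, ∃ γ : Γ, Zone e K (P γ) (Q lam) = ⨅ γ', Zone e K (P γ') (Q lam)) :
    (∀ lam : Λ, ∃ γ : Γ, Q lam ⊆ P γ + K) ↔
      (⨆ lam : Λ, ⨅ γ : Γ, Zone e K (P γ) (Q lam)) ≤ 0 :=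
  stmt_15_general K hKconv hKcone P Q hPKcl e he hatt
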